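/- arXiv:2509.11852 — 2 statements merged into one kernel-verified Lean document; each statement's English description precedes it below -/
import Mathlib

section
/- Let B_w be an invertible bilateral weighted backward shift on X = ℓp(ℤ) (1 ≤ p < ∞) or c0(ℤ), with weights bounded and bounded away from zero. If B_w has a nontrivial chain recurrent point, then every point of X is chain recurrent, i.e. CR(B_w) = X. -/
open Finset

/-- `ℓᵖ(ℤ)`. -/
abbrev LpZ (p : ENNReal) := lp (fun _ : ℤ => ℝ) p

/-- `c₀(ℤ)`. -/
abbrev C0Z := ZeroAtInftyContinuousMap ℤ ℝ

section Defs

variable {X : Type*} [NormedAddCommGroup X] [NormedSpace ℝ X]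

/-- `o : ℤ → X` is a full orbit of `T`. -/
def IsOrbit (T : X ≃L[ℝ] X) (o : ℤ → X) : Prop := ∀ j : ℤ, o (j + 1) = T (o j)

/-- `(x_j)_{j ∈ ℤ}` is a `δ`-pseudotrajectory of `T`. -/
def IsPT (T : X ≃L[ℝ] X) (δ : ℝ) (x : ℤ → X) : Prop :=
  ∀ j : ℤ, ‖T (x j) - x (j + 1)‖ < δ

/-- A sequence `x : ℤ → X` is periodic. -/
def IsPer (x : ℤ → X) : Prop := ∃ p : ℕ, 1 ≤ p ∧ ∀ j : ℤ, x (j + p) = x j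

/-- The shadowing property: every `δ`-pseudotrajectory is `ε`-shadowed by some full orbit. -/
def SP (T : X ≃L[ℝ] X) : Prop :=
  ∀ ε > (0 : ℝ), ∃ δ > (0 : ℝ), ∀ x : ℤ → X, IsPT T δ x →
    ∃ o : ℤ → X, IsOrbit T o ∧ ∀ j : ℤ, ‖x j - o j‖ < ε

/-- The periodic shadowing property: every periodic `δ`-pseudotrajectory is `ε`-shadowed
by (the orbit of) a periodic point. -/
def PSP (T : X ≃L[ℝ] X) : Prop :=
  ∀ ε > (0 : ℝ), ∃ δ > (0 : ℝ), ∀ x : ℤ → X, IsPT T δ x → IsPer x →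
    ∃ o : ℤ → X, IsOrbit T o ∧ IsPer o ∧ ∀ j : ℤ, ‖x j - o j‖ < ε

/-- `x` is a chain recurrent point of `T`: for every `δ > 0` there is a finite
`δ`-chain from `x` to `x`. -/
def ChainRec (T : X →L[ℝ] X) (x : X) : Prop :=
  ∀ δ > (0 : ℝ), ∃ (k : ℕ) (c : ℕ → X), 1 ≤ k ∧ c 0 = x ∧ c k = x ∧
    ∀ j < k, ‖T (c j) - c (j + 1)‖ < δ

/-- `T` has no nontrivial periodic point. -/
def OnlyTrivialPer (T : X →L[ℝ] X) : Prop :=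
  ∀ x : X, (∃ p : ℕ, 1 ≤ p ∧ (T ^ p) x = x) → x = 0

end Defs


/-!
Chain recurrent points of any operator `T` form a closed subspace, invariant under every operator
commuting with `T`. For a weighted shift, the coordinate projections `P n y = y n • e n` satisfy
`T ∘ P (n + 1) = P n ∘ T`, so projecting a periodic `δ`-chain through `x` onto the moving
coordinate `n - j` gives a `δ`-chain from `P n x` to `P (n - K) x`, which is as small as we like
for suitable large `K`; one more step reaches `0`. The same argument for `T⁻¹`, a weighted shift
after reflecting `ℤ`, gives a chain from `P n x` to `0` for `T⁻¹`, that is, one from `0` to `P n x`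
for `T`. Hence `P n x` is chain recurrent. For `x ≠ 0` some `P n x` is a nonzero multiple of
`e n`, so `e n` is chain recurrent, then so are all `e m` by invariance under `T` and `T⁻¹`, and
their closed span is the whole space.
-/

open Filter Topology

lemma ContinuousLinearMap.norm_apply_lt_of_norm_lt {E F : Type*} [SeminormedAddCommGroup E]
    [NormedSpace ℝ E] [SeminormedAddCommGroup F] [NormedSpace ℝ F] (L : E →L[ℝ] F) {v : E} {δ : ℝ}
    (h : ‖v‖ < δ) : ‖L v‖ < (‖L‖ + 1) * δ :=
  calc ‖L v‖ ≤ ‖L‖ * ‖v‖ := L.le_opNorm v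
    _ ≤ (‖L‖ + 1) * ‖v‖ := by gcongr; linarith
    _ < (‖L‖ + 1) * δ := by gcongr

section Chains

variable {X : Type*} [NormedAddCommGroup X] [NormedSpace ℝ X]

def ChainReach (T : X →L[ℝ] X) (δ : ℝ) (x y : X) : Prop :=
  ∃ (k : ℕ) (c : ℕ → X), 1 ≤ k ∧ c 0 = x ∧ c k = y ∧ ∀ j < k, ‖T (c j) - c (j + 1)‖ < δ

namespace ChainReach

variable {T : X →L[ℝ] X} {δ δ' : ℝ} {x y z : X}

lemma mono (h : ChainReach T δ x y) (hδ : δ ≤ δ') : ChainReach T δ' x y := by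
  obtain ⟨k, c, hk, hc0, hck, hc⟩ := h
  exact ⟨k, c, hk, hc0, hck, fun j hj => (hc j hj).trans_le hδ⟩

lemma of_norm_sub_lt (h : ‖T x - y‖ < δ) : ChainReach T δ x y :=
  ⟨1, fun j => if j = 0 then x else y, le_rfl, rfl, rfl, fun j hj => by
    obtain rfl : j = 0 := by omega
    simpa using h⟩

lemma trans (hxy : ChainReach T δ x y) (hyz : ChainReach T δ y z) : ChainReach T δ x z := by
  obtain ⟨k, c, hk, hc0, hck, hc⟩ := hxy
  obtain ⟨l, d, hl, hd0, hdl, hd⟩ := hyz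
  set e : ℕ → X := fun j => if j ≤ k then c j else d (j - k)
  have he : ∀ j, k ≤ j → e j = d (j - k) := by
    intro j hj
    by_cases hjk : j ≤ k
    · obtain rfl : j = k := le_antisymm hjk hj
      simp [e, hck, hd0]
    · simp [e, hjk]
  refine ⟨k + l, e, by omega, by simp [e, hc0], by rw [he _ (by omega)]; simpa using hdl,
    fun j hj => ?_⟩
  rcases lt_or_ge j k with hjk | hjk
  · simpa [e, hjk.le, Nat.succ_le_of_lt hjk] using hc j hjk
  · rw [he j hjk, he (j + 1) (by omega), Nat.sub_add_comm hjk]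
    exact hd _ (by omega)

lemma map_of_commute {L : X →L[ℝ] X} (hL : Commute L T) (h : ChainReach T δ x y) :
    ChainReach T ((‖L‖ + 1) * δ) (L x) (L y) := by
  obtain ⟨k, c, hk, hc0, hck, hc⟩ := h
  refine ⟨k, fun j => L (c j), hk, congrArg L hc0, congrArg L hck, fun j hj => ?_⟩
  have hTL : T (L (c j)) = L (T (c j)) := (DFunLike.congr_fun hL.eq (c j)).symm
  simp only [hTL, ← map_sub]
  exact L.norm_apply_lt_of_norm_lt (hc j hj)

lemma of_symm {T : X ≃L[ℝ] X} (h : ChainReach (T.symm : X →L[ℝ] X) δ x y) :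
    ChainReach (T : X →L[ℝ] X) ((‖(T : X →L[ℝ] X)‖ + 1) * δ) y x := by
  obtain ⟨k, c, hk, hc0, hck, hc⟩ := h
  refine ⟨k, fun j => c (k - j), hk, by simpa using hck, by simpa using hc0, fun j hj => ?_⟩
  obtain ⟨i, rfl⟩ : ∃ i, k = i + 1 + j := ⟨k - j - 1, by omega⟩
  have hstep : (T : X →L[ℝ] X) (c (i + 1)) - c i =
      (T : X →L[ℝ] X) (c (i + 1) - T.symm (c i)) := by simp
  simp only [show i + 1 + j - j = i + 1 by omega, show i + 1 + j - (j + 1) = i by omega]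
  rw [hstep]
  refine ContinuousLinearMap.norm_apply_lt_of_norm_lt _ ?_
  simpa [norm_sub_rev] using hc i (by omega)

lemma of_near (h : ChainReach T δ y y) {η : ℝ} (hxy : ‖x - y‖ ≤ η) :
    ChainReach T (δ + (‖T‖ + 1) * η) x x := by
  obtain ⟨k, c, hk, hc0, hck, hc⟩ := h
  set u : ℕ → X := fun j => if j = 0 ∨ j = k then x - y else 0
  have hu : ∀ j, ‖u j‖ ≤ η := fun j => by
    simp only [u]
    split_ifs
    exacts [hxy, norm_zero.trans_le ((norm_nonneg _).trans hxy)]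
  refine ⟨k, c + u, hk, by simp [u, hc0], by simp [u, hck], fun j hj => ?_⟩
  have hTu : ‖T (u j)‖ ≤ ‖T‖ * η := (T.le_opNorm _).trans (by gcongr; exact hu j)
  calc ‖T ((c + u) j) - (c + u) (j + 1)‖
        = ‖(T (c j) - c (j + 1)) + (T (u j) - u (j + 1))‖ := by
          simp only [Pi.add_apply, map_add]; abel_nf
    _ ≤ ‖T (c j) - c (j + 1)‖ + (‖T (u j)‖ + ‖u (j + 1)‖) :=
          (norm_add_le _ _).trans (by gcongr; exact norm_sub_le _ _)
    _ < δ + (‖T‖ + 1) * η := by linarith [hc j hj, hu (j + 1)]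

end ChainReach

namespace ChainRec

variable {T : X →L[ℝ] X} {x y : X}

lemma chainReach (hx : ChainRec T x) {δ : ℝ} (hδ : 0 < δ) : ChainReach T δ x x := hx δ hδ

lemma exists_periodic (hx : ChainRec T x) {δ : ℝ} (hδ : 0 < δ) :
    ∃ k, 1 ≤ k ∧ ∃ c : ℕ → X, c 0 = x ∧ Function.Periodic c k ∧
      ∀ j, ‖T (c j) - c (j + 1)‖ < δ := by
  obtain ⟨k, c, hk, hc0, hck, hc⟩ := hx δ hδ
  refine ⟨k, hk, fun j => c (j % k), by simpa using hc0, fun j => by simp, fun j => ?_⟩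
  have hr : j % k < k := Nat.mod_lt j hk
  have hsucc : c ((j + 1) % k) = c (j % k + 1) := by
    rw [← Nat.mod_add_mod]
    rcases Nat.lt_or_eq_of_le (show j % k + 1 ≤ k from hr) with hlt | heq
    · rw [Nat.mod_eq_of_lt hlt]
    · rw [heq, Nat.mod_self, hc0, hck]
  simpa only [hsucc] using hc _ hr

lemma add (hx : ChainRec T x) (hy : ChainRec T y) : ChainRec T (x + y) := by
  intro δ hδ
  obtain ⟨k, hk, c, hc0, hcp, hc⟩ := hx.exists_periodic (half_pos hδ)
  obtain ⟨l, hl, d, hd0, hdp, hd⟩ := hy.exists_periodic (half_pos hδ)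
  refine ⟨l * k, c + d, Nat.mul_pos hl hk, by simp [hc0, hd0], ?_, fun j _ => ?_⟩
  · have hck : c (l * k) = c 0 := by simpa using hcp.nat_mul_eq l
    have hdl : d (l * k) = d 0 := by simpa [mul_comm] using hdp.nat_mul_eq k
    simp [hck, hdl, hc0, hd0]
  · calc ‖T ((c + d) j) - (c + d) (j + 1)‖
          = ‖(T (c j) - c (j + 1)) + (T (d j) - d (j + 1))‖ := by
            simp only [Pi.add_apply, map_add]; abel_nf
      _ ≤ ‖T (c j) - c (j + 1)‖ + ‖T (d j) - d (j + 1)‖ := norm_add_le _ _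
      _ < δ := by linarith [hc j, hd j]

lemma map_of_commute {L : X →L[ℝ] X} (hL : Commute L T) (hx : ChainRec T x) :
    ChainRec T (L x) := fun δ hδ =>
  ((hx.chainReach (δ := δ / (‖L‖ + 1)) (by positivity)).map_of_commute hL).mono
    (mul_div_cancel₀ δ (by positivity)).le

lemma symm {T : X ≃L[ℝ] X} (hx : ChainRec (T : X →L[ℝ] X) x) :
    ChainRec (T.symm : X →L[ℝ] X) x := fun δ hδ =>
  ChainReach.of_symm (T := T.symm)
    (hx.chainReach (δ := δ / (‖(T.symm : X →L[ℝ] X)‖ + 1)) (by positivity))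
    |>.mono (mul_div_cancel₀ δ (by positivity)).le

end ChainRec

def chainRecSubmodule (T : X →L[ℝ] X) : Submodule ℝ X where
  carrier := {x | ChainRec T x}
  zero_mem' := fun _ hδ => ChainReach.of_norm_sub_lt (by simpa using hδ)
  add_mem' := ChainRec.add
  smul_mem' a x hx := by
    simpa using ChainRec.map_of_commute ((Commute.one_left T).smul_left a) hx

@[simp]
lemma mem_chainRecSubmodule {T : X →L[ℝ] X} {x : X} :
    x ∈ chainRecSubmodule T ↔ ChainRec T x := Iff.rfl

lemma isClosed_setOf_chainRec (T : X →L[ℝ] X) : IsClosed {x | ChainRec T x} := by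
  refine isClosed_of_closure_subset fun x hx δ hδ => ?_
  have hη : 0 < δ / 2 / (‖T‖ + 1) := by positivity
  obtain ⟨y, hy, hxy⟩ := Metric.mem_closure_iff.1 hx _ hη
  have hnear : ‖x - y‖ ≤ δ / 2 / (‖T‖ + 1) := by rw [← dist_eq_norm]; exact hxy.le
  refine ((hy.chainReach (half_pos hδ)).of_near hnear).mono ?_
  rw [mul_div_cancel₀ _ (by positivity)]
  linarith

end Chains

section Projections

variable {X : Type*} [NormedAddCommGroup X] [NormedSpace ℝ X] {P : ℤ → X →L[ℝ] X}
  {δ : ℝ} {x : X}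

lemma chainReach_proj {T : X →L[ℝ] X} (hTP : ∀ n y, T (P (n + 1) y) = P n (T y))
    (hP : ∀ n y, ‖P n y‖ ≤ ‖y‖) {k : ℕ} (hk : 1 ≤ k) {c : ℕ → X}
    (hc : ∀ j < k, ‖T (c j) - c (j + 1)‖ < δ) (n : ℤ) :
    ChainReach T δ (P n (c 0)) (P (n - k) (c k)) := by
  refine ⟨k, fun j => P (n - j) (c j), hk, by simp, rfl, fun j hj => ?_⟩
  have hshift : T (P (n - j) (c j)) = P (n - (j + 1 : ℕ)) (T (c j)) := by
    rw [← hTP, Nat.cast_succ, sub_add_eq_sub_sub, sub_add_cancel]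
  rw [hshift, ← map_sub]
  exact (hP _ _).trans_lt (hc j hj)

lemma ChainRec.chainReach_proj_zero {T : X →L[ℝ] X} (hTP : ∀ n y, T (P (n + 1) y) = P n (T y))
    (hP : ∀ n y, ‖P n y‖ ≤ ‖y‖) (hx : ChainRec T x)
    (hxP : Tendsto (fun n => P n x) atBot (𝓝 0)) (n : ℤ) (hδ : 0 < δ) :
    ChainReach T δ (P n x) 0 := by
  obtain ⟨k, hk, c, hc0, hcp, hc⟩ := hx.exists_periodic hδ
  have hε : 0 < δ / (‖T‖ + 1) := by positivity
  obtain ⟨N, hN⟩ := eventually_atBot.1 <|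
    (tendsto_zero_iff_norm_tendsto_zero.1 hxP).eventually (gt_mem_nhds hε)
  set m := (n - N).toNat + 1
  have hm : m ≤ m * k := Nat.le_mul_of_pos_right m hk
  have hcm : c (m * k) = x := by simpa [hc0] using hcp.nat_mul_eq m
  have hfar := chainReach_proj hTP hP (k := m * k) (by omega) (fun j _ => hc j) n
  rw [hc0, hcm] at hfar
  refine hfar.trans (.of_norm_sub_lt ?_)
  rw [sub_zero, ← mul_div_cancel₀ δ (by positivity : ‖T‖ + 1 ≠ 0)]
  exact T.norm_apply_lt_of_norm_lt (hN _ (by omega))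

lemma ChainRec.proj_mem {T : X ≃L[ℝ] X} (hTP : ∀ n y, T (P (n + 1) y) = P n (T y))
    (hP : ∀ n y, ‖P n y‖ ≤ ‖y‖) (hx : ChainRec (T : X →L[ℝ] X) x)
    (hxP : Tendsto (fun n => P n x) cofinite (𝓝 0)) (n : ℤ) :
    ChainRec (T : X →L[ℝ] X) (P n x) := by
  intro δ hδ
  have hTP' : ∀ m y, T.symm (P (-(m + 1)) y) = P (-m) (T.symm y) := fun m y => by
    have h := hTP (-(m + 1)) (T.symm y)
    rw [T.apply_symm_apply, show -(m + 1) + 1 = -m by ring] at h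
    rw [T.symm_apply_eq, h]
  have hdown := hx.chainReach_proj_zero hTP hP (hxP.mono_left atBot_le_cofinite) n hδ
  have hup := hx.symm.chainReach_proj_zero (P := fun m => P (-m)) (x := x) hTP'
    (fun m y => hP _ _) (hxP.comp (tendsto_neg_atBot_atTop.mono_right atTop_le_cofinite)) (-n)
    (δ := δ / (‖(T : X →L[ℝ] X)‖ + 1)) (by positivity)
  rw [neg_neg] at hup
  exact hdown.trans (hup.of_symm.mono (mul_div_cancel₀ δ (by positivity)).le)

end Projections

/-- A space of `ℤ`-indexed sequences in which the unit vectors `single n` form an unconditional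
basis, as in `ℓᵖ(ℤ)` for `p < ∞` and in `c₀(ℤ)`. -/
structure IntSeqBasis (X : Type*) [NormedAddCommGroup X] [NormedSpace ℝ X] where
  coord : ℤ → X →ₗ[ℝ] ℝ
  single : ℤ → X
  abs_coord_le : ∀ n y, |coord n y| ≤ ‖y‖
  norm_single_le : ∀ n, ‖single n‖ ≤ 1
  coord_single : ∀ m n, coord m (single n) = if m = n then 1 else 0
  hasSum : ∀ y, HasSum (fun n => coord n y • single n) y

namespace IntSeqBasis

variable {X : Type*} [NormedAddCommGroup X] [NormedSpace ℝ X] (B : IntSeqBasis X)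

lemma norm_coord_smul_single_le (n : ℤ) (y : X) : ‖B.coord n y • B.single n‖ ≤ ‖y‖ := by
  rw [norm_smul, Real.norm_eq_abs]
  exact (mul_le_of_le_one_right (abs_nonneg _) (B.norm_single_le n)).trans (B.abs_coord_le n y)

noncomputable def proj (n : ℤ) : X →L[ℝ] X :=
  ((B.coord n).smulRight (B.single n)).mkContinuous 1 fun y => by
    simpa using B.norm_coord_smul_single_le n y

lemma proj_apply (n : ℤ) (y : X) : B.proj n y = B.coord n y • B.single n := rfl

lemma norm_proj_apply_le (n : ℤ) (y : X) : ‖B.proj n y‖ ≤ ‖y‖ :=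
  B.norm_coord_smul_single_le n y

lemma tendsto_proj (y : X) : Tendsto (fun n => B.proj n y) cofinite (𝓝 0) :=
  (B.hasSum y).summable.tendsto_cofinite_zero

lemma eq_zero_of_coord {y : X} (h : ∀ n, B.coord n y = 0) : y = 0 :=
  (B.hasSum y).unique (by simp [h, hasSum_zero])

def IsWeightedShift (T : X →L[ℝ] X) (w : ℤ → ℝ) : Prop :=
  ∀ y n, B.coord n (T y) = w (n + 1) * B.coord (n + 1) y

variable {B} {T : X →L[ℝ] X} {w : ℤ → ℝ}

lemma IsWeightedShift.apply_single (hT : B.IsWeightedShift T w) (n : ℤ) :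
    T (B.single (n + 1)) = w (n + 1) • B.single n := by
  refine sub_eq_zero.1 (B.eq_zero_of_coord fun m => ?_)
  simp only [map_sub, map_smul, hT _ m, B.coord_single, add_left_inj, smul_eq_mul]
  split_ifs with h <;> simp [h]

lemma IsWeightedShift.apply_proj (hT : B.IsWeightedShift T w) (n : ℤ) (y : X) :
    T (B.proj (n + 1) y) = B.proj n (T y) := by
  rw [proj_apply, proj_apply, map_smul, hT.apply_single, hT, smul_smul, mul_comm]

lemma IsWeightedShift.weight_ne_zero {T : X ≃L[ℝ] X} (hT : B.IsWeightedShift T w) (n : ℤ) :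
    w n ≠ 0 := by
  intro hw
  obtain ⟨m, rfl⟩ : ∃ m, n = m + 1 := ⟨n - 1, by ring⟩
  have h := hT.apply_single m
  rw [hw, zero_smul, ContinuousLinearEquiv.coe_coe, T.map_eq_zero_iff] at h
  simpa [h] using B.coord_single (m + 1) (m + 1)

theorem IsWeightedShift.chainRec {T : X ≃L[ℝ] X} (hT : B.IsWeightedShift T w) {x : X}
    (hx0 : x ≠ 0) (hx : ChainRec (T : X →L[ℝ] X) x) (y : X) : ChainRec (T : X →L[ℝ] X) y := by
  set CR := chainRecSubmodule (T : X →L[ℝ] X)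
  obtain ⟨n₀, hn₀⟩ : ∃ n, B.coord n x ≠ 0 := by
    by_contra! h
    exact hx0 (B.eq_zero_of_coord h)
  have hsingle₀ : B.single n₀ ∈ CR :=
    (CR.smul_mem_iff hn₀).1 (hx.proj_mem hT.apply_proj B.norm_proj_apply_le (B.tendsto_proj x) n₀)
  have hsymm : Commute (T.symm : X →L[ℝ] X) T := by ext; simp
  have hsingle : ∀ n, B.single n ∈ CR := by
    intro n
    induction n using Int.inductionOn' (b := n₀) with
    | zero => exact hsingle₀
    | succ k _ hk =>
      have h := ChainRec.map_of_commute hsymm (CR.smul_mem (w (k + 1)) hk)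
      rw [← hT.apply_single] at h
      simpa [CR] using h
    | pred k _ hk =>
      have h := ChainRec.map_of_commute (Commute.refl _) hk
      rw [← sub_add_cancel k 1, hT.apply_single] at h
      exact (CR.smul_mem_iff (hT.weight_ne_zero _)).1 h
  exact (isClosed_setOf_chainRec _).mem_of_tendsto (B.hasSum y)
    (Eventually.of_forall fun F => CR.sum_mem fun n _ => CR.smul_mem _ (hsingle n))

end IntSeqBasis

noncomputable def lpIntSeqBasis (p : ENNReal) [Fact (1 ≤ p)] (hp : p ≠ ⊤) :
    IntSeqBasis (LpZ p) where
  coord n := lp.evalₗ _ p n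
  single n := lp.single p n 1
  abs_coord_le n y := lp.norm_apply_le_norm (zero_lt_one.trans_le Fact.out).ne' y n
  norm_single_le n := by simp [lp.norm_single (zero_lt_one.trans_le Fact.out)]
  coord_single m n := by simp [Pi.single_apply]
  hasSum y := by simpa [← lp.single_smul] using lp.hasSum_single hp y

noncomputable def c0Single (n : ℤ) : C0Z where
  toFun := Pi.single n 1
  continuous_toFun := continuous_of_discreteTopology
  zero_at_infty' := by
    rw [cocompact_eq_cofinite]
    exact tendsto_const_nhds.congr' <|
      (eventually_cofinite_ne n).mono fun m hm => by simp [hm]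

@[simps]
noncomputable def c0Coord (n : ℤ) : C0Z →ₗ[ℝ] ℝ where
  toFun y := y n
  map_add' _ _ := rfl
  map_smul' _ _ := rfl

lemma c0_hasSum (y : C0Z) : HasSum (fun n => y n • c0Single n) y := by
  rw [HasSum, Metric.tendsto_nhds]
  intro ε hε
  have hsmall : ∀ᶠ n in cofinite, |y n| < ε / 2 := by
    have hy := y.zero_at_infty'
    rw [cocompact_eq_cofinite] at hy
    simpa using hy.eventually (Metric.ball_mem_nhds 0 (half_pos hε))
  filter_upwards [eventually_ge_atTop (eventually_cofinite.1 hsmall).toFinset] with F hF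
  have happly : ∀ m, (∑ n ∈ F, y n • c0Single n) m = if m ∈ F then y m else 0 := fun m => by
    rw [← c0Coord_apply, map_sum]
    simp [c0Single, Pi.single_apply]
  rw [dist_eq_norm, ← ZeroAtInftyContinuousMap.norm_toBCF_eq_norm]
  refine ((BoundedContinuousFunction.norm_le (half_pos hε).le).2 fun m => ?_).trans_lt
    (half_lt_self hε)
  by_cases hm : m ∈ F
  · simpa [happly, hm] using (half_pos hε).le
  · have hm' : m ∉ (eventually_cofinite.1 hsmall).toFinset := fun h => hm (hF h)
    simpa [happly, hm] using (not_le.1 (by simpa using hm')).le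

noncomputable def c0IntSeqBasis : IntSeqBasis C0Z where
  coord := c0Coord
  single := c0Single
  abs_coord_le n y := by simpa using y.toBCF.norm_coe_le_norm n
  norm_single_le n := by
    rw [← ZeroAtInftyContinuousMap.norm_toBCF_eq_norm]
    refine (BoundedContinuousFunction.norm_le zero_le_one).2 fun m => ?_
    by_cases h : m = n <;> simp [c0Single, h]
  coord_single m n := by simp [c0Coord, c0Single, Pi.single_apply]
  hasSum := c0_hasSum

theorem stmt7_general (w : ℤ → ℝ) :
    (∀ (p : ENNReal) [Fact (1 ≤ p)], p ≠ ⊤ →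
      ∀ T : LpZ p ≃L[ℝ] LpZ p,
        (∀ (x : LpZ p) (n : ℤ), (T x) n = w (n + 1) * x (n + 1)) →
        (∃ x : LpZ p, x ≠ 0 ∧ ChainRec (T : LpZ p →L[ℝ] LpZ p) x) →
        ∀ x : LpZ p, ChainRec (T : LpZ p →L[ℝ] LpZ p) x) ∧
    (∀ T : C0Z ≃L[ℝ] C0Z,
        (∀ (x : C0Z) (n : ℤ), (T x) n = w (n + 1) * x (n + 1)) →
        (∃ x : C0Z, x ≠ 0 ∧ ChainRec (T : C0Z →L[ℝ] C0Z) x) →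
        ∀ x : C0Z, ChainRec (T : C0Z →L[ℝ] C0Z) x) :=
  ⟨fun p _ hp _ hT ⟨_, hx0, hx⟩ =>
      IntSeqBasis.IsWeightedShift.chainRec (B := lpIntSeqBasis p hp) hT hx0 hx,
    fun _ hT ⟨_, hx0, hx⟩ => IntSeqBasis.IsWeightedShift.chainRec (B := c0IntSeqBasis) hT hx0 hx⟩

/-- If an invertible bilateral weighted backward shift on `ℓᵖ(ℤ)` (`1 ≤ p < ∞`) or
`c₀(ℤ)`, with weights bounded and bounded away from zero, has a nontrivial chain
recurrent point, then every point is chain recurrent. -/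
theorem stmt7 (w : ℤ → ℝ) (hbd : ∃ C : ℝ, ∀ n : ℤ, |w n| ≤ C)
    (hbelow : ∃ c > (0 : ℝ), ∀ n : ℤ, c ≤ |w n|) :
    (∀ (p : ENNReal) [Fact (1 ≤ p)], p ≠ ⊤ →
      ∀ T : LpZ p ≃L[ℝ] LpZ p,
        (∀ (x : LpZ p) (n : ℤ), (T x) n = w (n + 1) * x (n + 1)) →
        (∃ x : LpZ p, x ≠ 0 ∧ ChainRec (T : LpZ p →L[ℝ] LpZ p) x) →
        ∀ x : LpZ p, ChainRec (T : LpZ p →L[ℝ] LpZ p) x) ∧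
    (∀ T : C0Z ≃L[ℝ] C0Z,
        (∀ (x : C0Z) (n : ℤ), (T x) n = w (n + 1) * x (n + 1)) →
        (∃ x : C0Z, x ≠ 0 ∧ ChainRec (T : C0Z →L[ℝ] C0Z) x) →
        ∀ x : C0Z, ChainRec (T : C0Z →L[ℝ] C0Z) x) :=
  stmt7_general w
end

section
/- Let B_w be a bilateral weighted backward shift on ℓp(ℤ) (1 ≤ p < ∞) or c0(ℤ) with bounded weights bounded away from zero and with no nontrivial periodic points. Then B_w has the periodic shadowing property if and only if: for every ε > 0 there is δ > 0 such that for all n ∈ ℕ and all y_1, …, y_n ∈ B(0, δ) with ∑_{i=0}^{n−1} B_w^{i+1} y_{n−i} ∈ B(0, δ), one has ∑_{i=0}^{k−1} B_w^i y_{k−i} ∈ B(0, ε) for all k ≤ n. -/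
open Finset

/-!
Since `0` is the only periodic point, the periodic shadowing property says that periodic
`δ`-pseudotrajectories stay in `B(0, ε)`. A finite chain `0 = z₀, z₁, …, zₙ` with jumps
`y j = z j - T (z (j - 1))` has `z k = ∑_{i<k} T^i y_{k-i}`, and if `T zₙ` is small, repeating
the closed chain `z₀, …, zₙ` gives a periodic pseudotrajectory; this proves one direction.
Conversely, a periodic `δ/2`-pseudotrajectory `x` is bounded, say by `B`; damping it by a tent
function of width `2L` with `B / L < δ / 2` gives a `δ`-chain from `0` to `0` that passes through
any prescribed `x j`.
-/

theorem IsPer.exists_norm_le {X : Type*} [Norm X] {x : ℤ → X} (hx : IsPer x) :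
    ∃ B, ∀ j, ‖x j‖ ≤ B := by
  obtain ⟨p, hp, hxp⟩ := hx
  obtain ⟨B, hB⟩ := ((Set.finite_Ico (0 : ℤ) p).image fun j => ‖x j‖).bddAbove
  refine ⟨B, fun j => ?_⟩
  obtain ⟨i, hi, hxi⟩ := Function.Periodic.exists_mem_Ico₀ (c := (p : ℤ)) hxp (by omega) j
  rw [hxi]
  exact hB ⟨i, hi, rfl⟩

theorem isPer_comp_intCast {X : Type*} {m : ℕ} [NeZero m] (z : ℕ → X) :
    IsPer (fun j : ℤ => z (j : ZMod m).val) :=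
  ⟨m, NeZero.one_le, fun j => by push_cast [ZMod.natCast_self, add_zero]; rfl⟩

theorem norm_map_smul_sub_smul_le {X F : Type*} [SeminormedAddCommGroup X] [NormedSpace ℝ X]
    [FunLike F X X] [LinearMapClass F ℝ X X] (T : F) (s t : ℝ) (u v : X) :
    ‖T (s • u) - t • v‖ ≤ |s| * ‖T u - v‖ + |s - t| * ‖v‖ :=
  calc ‖T (s • u) - t • v‖ = ‖s • (T u - v) + (s - t) • v‖ := by
        rw [map_smul]; congr 1; module
    _ ≤ ‖s • (T u - v)‖ + ‖(s - t) • v‖ := norm_add_le _ _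
    _ = |s| * ‖T u - v‖ + |s - t| * ‖v‖ := by
        rw [norm_smul, norm_smul, Real.norm_eq_abs, Real.norm_eq_abs]

noncomputable def tent (L k : ℕ) : ℝ := 1 - |(k : ℝ) - L| / L

section Tent

variable {L : ℕ}

theorem tent_zero (hL : 0 < L) : tent L 0 = 0 := by
  simp [tent, hL.ne']

theorem tent_two_mul (hL : 0 < L) : tent L (2 * L) = 0 := by
  have hL' : (L : ℝ) ≠ 0 := by positivity
  simp only [tent, Nat.cast_mul, Nat.cast_ofNat]
  rw [show 2 * (L : ℝ) - L = L by ring, abs_of_pos (by positivity), div_self hL', sub_self]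

theorem tent_self : tent L L = 1 := by simp [tent]

theorem abs_tent_le_one {k : ℕ} (hk : k ≤ 2 * L) : |tent L k| ≤ 1 := by
  rcases Nat.eq_zero_or_pos L with rfl | hL
  · simp [tent]
  have hL' : (0 : ℝ) < L := by exact_mod_cast hL
  have hk' : (k : ℝ) ≤ 2 * L := by exact_mod_cast hk
  have hle : |(k : ℝ) - L| / L ≤ 1 := by
    rw [div_le_one hL', abs_le]; constructor <;> linarith
  rw [tent, abs_le]
  constructor <;> linarith [div_nonneg (abs_nonneg ((k : ℝ) - L)) hL'.le]

theorem abs_tent_sub_tent_succ_le (k : ℕ) : |tent L k - tent L (k + 1)| ≤ 1 / L := by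
  rw [tent, tent, sub_sub_sub_cancel_left, ← sub_div, abs_div, Nat.abs_cast]
  gcongr
  push_cast
  calc |(|(k : ℝ) + 1 - L| - |(k : ℝ) - L|)| ≤ |((k : ℝ) + 1 - L) - ((k : ℝ) - L)| :=
        abs_abs_sub_abs_le_abs_sub _ _
    _ = 1 := by norm_num

end Tent

section Shift

variable {X : Type*} [NormedAddCommGroup X] [NormedSpace ℝ X]

theorem IsOrbit.apply_add_nat {T : X ≃L[ℝ] X} {o : ℤ → X} (ho : IsOrbit T o) (j : ℤ) (m : ℕ) :
    o (j + m) = ((T : X →L[ℝ] X) ^ m) (o j) := by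
  induction m with
  | zero => simp
  | succ m ih =>
    rw [Nat.cast_succ, ← add_assoc, ho, ih, pow_succ']
    rfl

theorem IsOrbit.eq_zero_of_isPer {T : X ≃L[ℝ] X} (hT : OnlyTrivialPer (T : X →L[ℝ] X))
    {o : ℤ → X} (ho : IsOrbit T o) (hper : IsPer o) : o = 0 := by
  obtain ⟨p, hp, hop⟩ := hper
  funext j
  exact hT (o j) ⟨p, hp, by rw [← ho.apply_add_nat, hop]⟩

theorem psp_iff_forall_norm_lt {T : X ≃L[ℝ] X} (hT : OnlyTrivialPer (T : X →L[ℝ] X)) :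
    PSP T ↔ ∀ ε > (0 : ℝ), ∃ δ > (0 : ℝ),
      ∀ x : ℤ → X, IsPT T δ x → IsPer x → ∀ j, ‖x j‖ < ε := by
  refine forall₂_congr fun ε _ => exists_congr fun δ => and_congr_right fun _ =>
    forall₃_congr fun x _ _ => ⟨?_, ?_⟩
  · rintro ⟨o, ho, hper, hclose⟩ j
    simpa [ho.eq_zero_of_isPer hT hper] using hclose j
  · intro hsmall
    exact ⟨0, fun j => (map_zero T).symm, ⟨1, le_rfl, fun j => rfl⟩, by simpa using hsmall⟩

theorem isPT_of_closed_chain (T : X ≃L[ℝ] X) {δ : ℝ} {m : ℕ} [NeZero m] {z : ℕ → X}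
    (hz : z m = z 0) (hstep : ∀ k < m, ‖T (z k) - z (k + 1)‖ < δ) :
    IsPT T δ (fun j : ℤ => z (j : ZMod m).val) := by
  intro j
  set a : ZMod m := (j : ZMod m) with ha
  show ‖T (z a.val) - z ((j + 1 : ℤ) : ZMod m).val‖ < δ
  rw [show ((j + 1 : ℤ) : ZMod m) = ((a.val + 1 : ℕ) : ZMod m) by
    push_cast [ZMod.natCast_zmod_val, ha]; rfl]
  obtain hlt | heq : a.val + 1 < m ∨ a.val + 1 = m := Nat.lt_or_eq_of_le (ZMod.val_lt a)
  · rw [ZMod.val_natCast_of_lt hlt]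
    exact hstep _ (ZMod.val_lt a)
  · rw [heq, ZMod.natCast_self, ZMod.val_zero, ← hz]
    simpa only [heq] using hstep _ (ZMod.val_lt a)

def chainSum (T : X →L[ℝ] X) (y : ℕ → X) (k : ℕ) : X :=
  ∑ i ∈ range k, (T ^ i) (y (k - i))

variable (T : X →L[ℝ] X) (y : ℕ → X)

@[simp]
theorem chainSum_zero : chainSum T y 0 = 0 := by simp [chainSum]

theorem chainSum_succ (k : ℕ) : chainSum T y (k + 1) = T (chainSum T y k) + y (k + 1) := by
  rw [chainSum, sum_range_succ', chainSum, map_sum]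
  congr 1
  refine sum_congr rfl fun i _ => ?_
  rw [Nat.add_sub_add_right, pow_succ']
  rfl

theorem sum_pow_succ_eq_map_chainSum (n : ℕ) :
    ∑ i ∈ range n, (T ^ (i + 1)) (y (n - i)) = T (chainSum T y n) := by
  rw [chainSum, map_sum]
  refine sum_congr rfl fun i _ => ?_
  rw [pow_succ']
  rfl

theorem chainSum_sub_map_pred {z : ℕ → X} (hz : z 0 = 0) (k : ℕ) :
    chainSum T (fun k => z k - T (z (k - 1))) k = z k := by
  induction k with
  | zero => simp [hz]
  | succ k ih => simp [chainSum_succ, ih]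

theorem norm_chainSum_lt_of_forall_norm_lt {T : X ≃L[ℝ] X} {δ ε : ℝ}
    (hsmall : ∀ x : ℤ → X, IsPT T δ x → IsPer x → ∀ j, ‖x j‖ < ε)
    {n : ℕ} {y : ℕ → X} (hy : ∀ i, 1 ≤ i → i ≤ n → ‖y i‖ < δ)
    (hclose : ‖T (chainSum T y n)‖ < δ) {k : ℕ} (hk : k ≤ n) : ‖chainSum T y k‖ < ε := by
  set z : ℕ → X := fun k => if k ≤ n then chainSum T y k else 0
  have hstep : ∀ k < n + 1, ‖T (z k) - z (k + 1)‖ < δ := by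
    intro k hk
    obtain hkn | rfl := Nat.lt_or_eq_of_le (Nat.le_of_lt_succ hk)
    · simpa [z, hkn.le, Nat.succ_le_of_lt hkn, chainSum_succ] using hy (k + 1) (by omega) hkn
    · simpa [z] using hclose
  have := hsmall _ (isPT_of_closed_chain T (by simp [z]) hstep) (isPer_comp_intCast z) k
  simpa [z, hk, ZMod.val_natCast_of_lt (Nat.lt_succ_of_le hk)] using this

theorem norm_lt_of_closed_chain {T : X ≃L[ℝ] X} {δ ε : ℝ}
    (hchain : ∀ n : ℕ, 1 ≤ n → ∀ y : ℕ → X, (∀ i, 1 ≤ i → i ≤ n → ‖y i‖ < δ) →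
      ‖T (chainSum T y n)‖ < δ → ∀ k, 1 ≤ k → k ≤ n → ‖chainSum T y k‖ < ε) (hδ : 0 < δ)
    {n : ℕ} {z : ℕ → X} (hz0 : z 0 = 0) (hzn : z n = 0)
    (hstep : ∀ k < n, ‖T (z k) - z (k + 1)‖ < δ) {k : ℕ} (hk1 : 1 ≤ k) (hkn : k ≤ n) :
    ‖z k‖ < ε := by
  have hsum := chainSum_sub_map_pred (T : X →L[ℝ] X) hz0
  rw [← hsum]
  refine hchain n (hk1.trans hkn) _ (fun i hi hin => ?_)
    (by rw [hsum, hzn, map_zero, norm_zero]; exact hδ) k hk1 hkn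
  obtain ⟨i, rfl⟩ := Nat.exists_eq_add_of_le' hi
  simpa [norm_sub_rev] using hstep i hin

theorem norm_lt_of_isPT_of_isPer {T : X ≃L[ℝ] X} {δ ε : ℝ} (hδ : 0 < δ)
    (hchain : ∀ (n : ℕ) (z : ℕ → X), z 0 = 0 → z n = 0 →
      (∀ k < n, ‖T (z k) - z (k + 1)‖ < δ) → ∀ k, 1 ≤ k → k ≤ n → ‖z k‖ < ε)
    {x : ℤ → X} (hx : IsPT T (δ / 2) x) (hper : IsPer x) (j : ℤ) : ‖x j‖ < ε := by
  obtain ⟨B, hB⟩ := hper.exists_norm_le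
  obtain ⟨L, hL⟩ := exists_nat_gt (2 * B / δ)
  have hB0 : 0 ≤ B := (norm_nonneg _).trans (hB 0)
  have hLpos : (0 : ℝ) < L := lt_of_le_of_lt (by positivity) hL
  have hL0 : 0 < L := by exact_mod_cast hLpos
  have hBL : 1 / L * B < δ / 2 := by
    rw [div_lt_iff₀ hδ] at hL
    rw [one_div_mul_eq_div, div_lt_iff₀ hLpos]
    linarith
  set z : ℕ → X := fun k => tent L k • x (j - L + k)
  have hstep : ∀ k < 2 * L, ‖T (z k) - z (k + 1)‖ < δ := by
    intro k hk
    calc ‖T (z k) - z (k + 1)‖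
        ≤ |tent L k| * ‖T (x (j - L + k)) - x (j - L + k + 1)‖
          + |tent L k - tent L (k + 1)| * ‖x (j - L + k + 1)‖ := by
          simp only [z]
          push_cast
          rw [← add_assoc]
          exact norm_map_smul_sub_smul_le T _ _ _ _
      _ < δ / 2 + 1 / L * B := by
          refine add_lt_add_of_lt_of_le ?_ ?_
          · exact (mul_le_of_le_one_left (norm_nonneg _) (abs_tent_le_one hk.le)).trans_lt (hx _)
          · exact mul_le_mul (abs_tent_sub_tent_succ_le k) (hB _) (norm_nonneg _) (by positivity)
      _ < δ := by linarith
  have := hchain (2 * L) z (by simp [z, tent_zero hL0]) (by simp [z, tent_two_mul hL0]) hstep L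
    hL0 (by omega)
  simpa [z, tent_self] using this

theorem psp_iff_forall_norm_chainSum_lt {T : X ≃L[ℝ] X} (hT : OnlyTrivialPer (T : X →L[ℝ] X)) :
    PSP T ↔
      ∀ ε > (0 : ℝ), ∃ δ > (0 : ℝ), ∀ n : ℕ, 1 ≤ n → ∀ y : ℕ → X,
        (∀ i, 1 ≤ i → i ≤ n → ‖y i‖ < δ) →
        ‖∑ i ∈ range n, ((T : X →L[ℝ] X) ^ (i + 1)) (y (n - i))‖ < δ →
        ∀ k, 1 ≤ k → k ≤ n →
          ‖∑ i ∈ range k, ((T : X →L[ℝ] X) ^ i) (y (k - i))‖ < ε := by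
  simp only [sum_pow_succ_eq_map_chainSum]
  rw [psp_iff_forall_norm_lt hT]
  refine forall₂_congr fun ε _ => ⟨fun ⟨δ, hδ, hsmall⟩ => ⟨δ, hδ, ?_⟩, fun ⟨δ, hδ, hchain⟩ =>
    ⟨δ / 2, half_pos hδ, fun x => ?_⟩⟩
  · exact fun n _ y hy hclose k _ hk => norm_chainSum_lt_of_forall_norm_lt hsmall hy hclose hk
  · exact norm_lt_of_isPT_of_isPer hδ fun n z hz0 hzn hstep k hk1 hkn =>
      norm_lt_of_closed_chain hchain hδ hz0 hzn hstep hk1 hkn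

end Shift

theorem stmt15_general (w : ℤ → ℝ) :
    (∀ (p : ENNReal) [Fact (1 ≤ p)], p ≠ ⊤ →
      ∀ T : LpZ p ≃L[ℝ] LpZ p,
        (∀ (x : LpZ p) (n : ℤ), (T x) n = w (n + 1) * x (n + 1)) →
        OnlyTrivialPer (T : LpZ p →L[ℝ] LpZ p) →
        (PSP T ↔
          ∀ ε > (0 : ℝ), ∃ δ > (0 : ℝ), ∀ n : ℕ, 1 ≤ n → ∀ y : ℕ → LpZ p,
            (∀ i, 1 ≤ i → i ≤ n → ‖y i‖ < δ) →
            ‖∑ i ∈ Finset.range n, ((T : LpZ p →L[ℝ] LpZ p) ^ (i + 1)) (y (n - i))‖ < δ →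
            ∀ k, 1 ≤ k → k ≤ n →
              ‖∑ i ∈ Finset.range k, ((T : LpZ p →L[ℝ] LpZ p) ^ i) (y (k - i))‖ < ε)) ∧
    (∀ T : C0Z ≃L[ℝ] C0Z,
        (∀ (x : C0Z) (n : ℤ), (T x) n = w (n + 1) * x (n + 1)) →
        OnlyTrivialPer (T : C0Z →L[ℝ] C0Z) →
        (PSP T ↔
          ∀ ε > (0 : ℝ), ∃ δ > (0 : ℝ), ∀ n : ℕ, 1 ≤ n → ∀ y : ℕ → C0Z,
            (∀ i, 1 ≤ i → i ≤ n → ‖y i‖ < δ) →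
            ‖∑ i ∈ Finset.range n, ((T : C0Z →L[ℝ] C0Z) ^ (i + 1)) (y (n - i))‖ < δ →
            ∀ k, 1 ≤ k → k ≤ n →
              ‖∑ i ∈ Finset.range k, ((T : C0Z →L[ℝ] C0Z) ^ i) (y (k - i))‖ < ε)) :=
  ⟨fun _ _ _ _ _ hT => psp_iff_forall_norm_chainSum_lt hT,
    fun _ _ hT => psp_iff_forall_norm_chainSum_lt hT⟩

/-- For an invertible bilateral weighted backward shift `B_w` on `ℓᵖ(ℤ)` (`1 ≤ p < ∞`)
or `c₀(ℤ)`, with weights bounded and bounded away from zero and no nontrivial periodic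
points, the periodic shadowing property is equivalent to: for every `ε > 0` there is
`δ > 0` such that for all `n ≥ 1` and all `y_1, …, y_n ∈ B(0, δ)` with
`∑_{i=0}^{n−1} B_w^{i+1} y_{n−i} ∈ B(0, δ)`, one has
`∑_{i=0}^{k−1} B_w^i y_{k−i} ∈ B(0, ε)` for all `1 ≤ k ≤ n`. -/
theorem stmt15 (w : ℤ → ℝ) (hbd : ∃ C : ℝ, ∀ n : ℤ, |w n| ≤ C)
    (hbelow : ∃ c > (0 : ℝ), ∀ n : ℤ, c ≤ |w n|) :
    (∀ (p : ENNReal) [Fact (1 ≤ p)], p ≠ ⊤ →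
      ∀ T : LpZ p ≃L[ℝ] LpZ p,
        (∀ (x : LpZ p) (n : ℤ), (T x) n = w (n + 1) * x (n + 1)) →
        OnlyTrivialPer (T : LpZ p →L[ℝ] LpZ p) →
        (PSP T ↔
          ∀ ε > (0 : ℝ), ∃ δ > (0 : ℝ), ∀ n : ℕ, 1 ≤ n → ∀ y : ℕ → LpZ p,
            (∀ i, 1 ≤ i → i ≤ n → ‖y i‖ < δ) →
            ‖∑ i ∈ Finset.range n, ((T : LpZ p →L[ℝ] LpZ p) ^ (i + 1)) (y (n - i))‖ < δ →
            ∀ k, 1 ≤ k → k ≤ n →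
              ‖∑ i ∈ Finset.range k, ((T : LpZ p →L[ℝ] LpZ p) ^ i) (y (k - i))‖ < ε)) ∧
    (∀ T : C0Z ≃L[ℝ] C0Z,
        (∀ (x : C0Z) (n : ℤ), (T x) n = w (n + 1) * x (n + 1)) →
        OnlyTrivialPer (T : C0Z →L[ℝ] C0Z) →
        (PSP T ↔
          ∀ ε > (0 : ℝ), ∃ δ > (0 : ℝ), ∀ n : ℕ, 1 ≤ n → ∀ y : ℕ → C0Z,
            (∀ i, 1 ≤ i → i ≤ n → ‖y i‖ < δ) →
            ‖∑ i ∈ Finset.range n, ((T : C0Z →L[ℝ] C0Z) ^ (i + 1)) (y (n - i))‖ < δ →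
            ∀ k, 1 ≤ k → k ≤ n →
              ‖∑ i ∈ Finset.range k, ((T : C0Z →L[ℝ] C0Z) ^ i) (y (k - i))‖ < ε)) :=
  stmt15_general w
end
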